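/- Let ℓ > 0, α ∈ (0, π/2], θ = α/2, and for σ > 0 define I(σ) = (1/ℓ) ∫_{−ℓ/2}^{ℓ/2} Φ̄(−u·cos θ/σ) · Φ̄(u·sin θ/σ) du. Then I(σ) > 0 for every σ > 0, and lim_{σ→0⁺} σ^{−1} · I(σ) = (1/(ℓ·√(2π))) · (tan(α/2) + cot(α/2)). -/

import Mathlib

open MeasureTheory Filter Real Set

noncomputable section

/-- Complementary CDF of the standard normal distribution. -/
def PhiBar (x : ℝ) : ℝ :=
  ∫ u in Set.Ioi x, (Real.sqrt (2 * Real.pi))⁻¹ * Real.exp (-(u ^ 2) / 2)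

def gd (x : ℝ) : ℝ := (Real.sqrt (2 * Real.pi))⁻¹ * Real.exp (-(x ^ 2) / 2)

lemma PhiBar_def (x : ℝ) : PhiBar x = ∫ u in Set.Ioi x, gd u := rfl

lemma sqrt_two_pi_pos : 0 < Real.sqrt (2 * Real.pi) :=
  Real.sqrt_pos.2 (by positivity)

lemma gd_pos (x : ℝ) : 0 < gd x := by
  unfold gd; positivity

lemma gd_cont : Continuous gd := by
  unfold gd; continuity

lemma gd_even (x : ℝ) : gd (-x) = gd x := by simp [gd]

lemma gd_eq (x : ℝ) : gd x = (Real.sqrt (2 * Real.pi))⁻¹ * Real.exp (-(1/2) * x ^ 2) := by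
  unfold gd; ring_nf

lemma gd_integrable : Integrable gd := by
  have h := (integrable_exp_neg_mul_sq (by norm_num : (0:ℝ) < 1/2)).const_mul
    (Real.sqrt (2 * Real.pi))⁻¹
  refine h.congr (Eventually.of_forall fun x => ?_)
  rw [gd_eq]

lemma gd_integral : ∫ x, gd x = 1 := by
  have h : ∫ x, gd x = (Real.sqrt (2 * Real.pi))⁻¹ * ∫ x, Real.exp (-(1/2) * x ^ 2) := by
    rw [← integral_const_mul]
    exact integral_congr_ae (Eventually.of_forall fun x => by rw [gd_eq])
  rw [h, integral_gaussian]
  rw [show Real.pi / (1/2) = 2 * Real.pi by ring]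
  exact inv_mul_cancel₀ sqrt_two_pi_pos.ne'

lemma PhiBar_eq_one_sub (x : ℝ) : PhiBar x = 1 - ∫ u in Set.Iic x, gd u := by
  rw [PhiBar_def, eq_sub_iff_add_eq, add_comm,
    intervalIntegral.integral_Iic_add_Ioi gd_integrable.integrableOn gd_integrable.integrableOn, gd_integral]

lemma PhiBar_nonneg (x : ℝ) : 0 ≤ PhiBar x :=
  setIntegral_nonneg measurableSet_Ioi fun u _ => (gd_pos u).le

lemma PhiBar_le_one (x : ℝ) : PhiBar x ≤ 1 := by
  rw [PhiBar_eq_one_sub]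
  have : (0:ℝ) ≤ ∫ u in Set.Iic x, gd u :=
    setIntegral_nonneg measurableSet_Iic fun u _ => (gd_pos u).le
  linarith

lemma PhiBar_pos (x : ℝ) : 0 < PhiBar x := by
  rw [PhiBar_def, setIntegral_pos_iff_support_of_nonneg_ae
    (Eventually.of_forall fun u => (gd_pos u).le) gd_integrable.integrableOn]
  have : Function.support gd = Set.univ := by
    ext u; simp [Function.mem_support, (gd_pos u).ne']
  rw [this, Set.univ_inter]
  simp [Real.volume_Ioi]

lemma PhiBar_sub (a b : ℝ) : PhiBar a - PhiBar b = ∫ u in a..b, gd u := by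
  rw [PhiBar_eq_one_sub, PhiBar_eq_one_sub,
    ← intervalIntegral.integral_Iic_sub_Iic gd_integrable.integrableOn gd_integrable.integrableOn]
  ring

lemma hasDerivAt_PhiBar (x : ℝ) : HasDerivAt PhiBar (-gd x) x := by
  have h : ∀ y, PhiBar y = PhiBar 0 - ∫ u in (0:ℝ)..y, gd u := by
    intro y; rw [← PhiBar_sub]; ring
  have hd : HasDerivAt (fun y => ∫ u in (0:ℝ)..y, gd u) (gd x) x :=
    intervalIntegral.integral_hasDerivAt_right
      (gd_cont.intervalIntegrable _ _)
      (gd_cont.stronglyMeasurableAtFilter _ _)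
      gd_cont.continuousAt
  have := (hasDerivAt_const x (PhiBar 0)).sub hd
  rw [show PhiBar = (fun x => PhiBar 0) - fun y => ∫ u in (0:ℝ)..y, gd u from funext fun y => h y]
  simpa using this

lemma PhiBar_continuous : Continuous PhiBar := by
  have : Differentiable ℝ PhiBar := fun x => (hasDerivAt_PhiBar x).differentiableAt
  exact this.continuous

lemma PhiBar_neg (x : ℝ) : PhiBar (-x) = 1 - PhiBar x := by
  have h1 : PhiBar (-x) = ∫ u in Set.Ioi (-x), gd (-u) := by
    rw [PhiBar_def]
    exact setIntegral_congr_fun measurableSet_Ioi fun u _ => (gd_even u).symm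
  rw [h1, integral_comp_neg_Ioi, neg_neg, PhiBar_eq_one_sub]
  ring

lemma gd_tendsto_atTop : Tendsto gd atTop (nhds 0) := by
  have h1 : Tendsto (fun x : ℝ => -(x ^ 2) / 2) atTop atBot := by
    apply Tendsto.atBot_div_const (by norm_num)
    exact tendsto_neg_atBot_iff.2 (tendsto_pow_atTop (by norm_num))
  have := (Real.tendsto_exp_atBot.comp h1).const_mul (Real.sqrt (2 * Real.pi))⁻¹
  rw [mul_zero] at this
  exact this.congr fun x => rfl

lemma gd_tendsto_atBot : Tendsto gd atBot (nhds 0) := by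
  have := gd_tendsto_atTop.comp tendsto_neg_atBot_atTop
  exact this.congr fun x => by simp [Function.comp, gd_even]

lemma PhiBar_tendsto_atTop : Tendsto PhiBar atTop (nhds 0) := by
  have h := tendsto_setIntegral_of_antitone (f := gd) (μ := volume)
    (s := fun x : ℝ => Set.Ioi x) (fun x => measurableSet_Ioi)
    (fun a b hab => Set.Ioi_subset_Ioi hab) ⟨0, gd_integrable.integrableOn⟩
  have h2 : ⋂ x : ℝ, Set.Ioi x = (∅ : Set ℝ) := by
    ext y; simp only [Set.mem_iInter, Set.mem_Ioi, Set.mem_empty_iff_false, iff_false, not_forall,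
      not_lt]
    exact ⟨y, le_rfl⟩
  rw [h2] at h
  simp at h
  exact h

lemma PhiBar_tendsto_atBot : Tendsto PhiBar atBot (nhds 1) := by
  have h : ∀ x : ℝ, PhiBar x = 1 - PhiBar (-x) := by
    intro x; rw [PhiBar_neg]; ring
  have := (tendsto_const_nhds (x := (1:ℝ)) (f := atBot)).sub
    (PhiBar_tendsto_atTop.comp tendsto_neg_atBot_atTop)
  simp only [Function.comp] at this
  rw [show (1:ℝ) - 0 = 1 by ring] at this
  exact Tendsto.congr (fun x => (h x).symm) this

lemma integral_id_mul_gd (x : ℝ) : ∫ u in Set.Ioi x, u * gd u = gd x := by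
  have hderiv : ∀ u ∈ Set.Ici x, HasDerivAt (fun v => -gd v) (u * gd u) u := by
    intro u _
    have h1 : HasDerivAt (fun v : ℝ => -(v ^ 2) / 2) (-u) u := by
      have h := ((hasDerivAt_pow 2 u).neg).div_const 2
      convert h using 1
      · rfl
      · rfl
      norm_num
      ring
    have h2 : HasDerivAt (fun v => Real.exp (-(v ^ 2) / 2)) (Real.exp (-(u ^ 2)/2) * (-u)) u :=
      (Real.hasDerivAt_exp _).comp u h1
    have := ((h2.const_mul (Real.sqrt (2 * Real.pi))⁻¹).neg)
    convert this using 1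
    · rfl
    · rfl
    · rfl
    unfold gd; ring
  have hint : IntegrableOn (fun u => u * gd u) (Set.Ioi x) := by
    have h := (integrable_mul_exp_neg_mul_sq (by norm_num : (0:ℝ) < 1/2)).const_mul
      (Real.sqrt (2 * Real.pi))⁻¹
    refine (h.congr (Eventually.of_forall fun u => ?_)).integrableOn
    rw [gd_eq]; ring
  have hlim : Tendsto (fun v => -gd v) atTop (nhds 0) := by
    simpa using gd_tendsto_atTop.neg
  rw [integral_Ioi_of_hasDerivAt_of_tendsto' hderiv hint hlim]
  ring

lemma mills (x : ℝ) (hx : 0 < x) : x * PhiBar x ≤ gd x := by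
  rw [← integral_id_mul_gd x, PhiBar_def, ← integral_const_mul]
  refine setIntegral_mono_on ?_ ?_ measurableSet_Ioi ?_
  · exact (gd_integrable.integrableOn).const_mul x
  · have h := (integrable_mul_exp_neg_mul_sq (by norm_num : (0:ℝ) < 1/2)).const_mul
      (Real.sqrt (2 * Real.pi))⁻¹
    refine (h.congr (Eventually.of_forall fun u => ?_)).integrableOn
    rw [gd_eq]; ring
  · intro u hu
    exact mul_le_mul_of_nonneg_right (le_of_lt hu) (gd_pos u).le

lemma mul_PhiBar_tendsto : Tendsto (fun x => x * PhiBar x) atTop (nhds 0) := by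
  refine tendsto_of_tendsto_of_tendsto_of_le_of_le' tendsto_const_nhds gd_tendsto_atTop ?_ ?_
  · filter_upwards [eventually_gt_atTop 0] with x hx
    exact mul_nonneg hx.le (PhiBar_nonneg x)
  · filter_upwards [eventually_gt_atTop 0] with x hx
    exact mills x hx

lemma hasDerivAt_gd (x : ℝ) : HasDerivAt gd (-(x * gd x)) x := by
  have h1 : HasDerivAt (fun v : ℝ => -(v ^ 2) / 2) (-x) x := by
    have h := ((hasDerivAt_pow 2 x).neg).div_const 2
    convert h using 1
    · rfl
    · rfl
    norm_num
    ring
  have h2 : HasDerivAt (fun v => Real.exp (-(v ^ 2) / 2)) (Real.exp (-(x ^ 2)/2) * (-x)) x :=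
    (Real.hasDerivAt_exp _).comp x h1
  have := h2.const_mul (Real.sqrt (2 * Real.pi))⁻¹
  convert this using 1
  · rfl
  · rfl
  · rfl
  unfold gd; ring

lemma gd_mul (c s v : ℝ) (h : c ^ 2 + s ^ 2 = 1) :
    gd (v * c) * gd (v * s) = (Real.sqrt (2 * Real.pi))⁻¹ * gd v := by
  have he : Real.exp (-((v*c) ^ 2)/2) * Real.exp (-((v*s) ^ 2)/2)
      = Real.exp (-(v ^ 2)/2) := by
    rw [← Real.exp_add]
    congr 1
    linear_combination (-(v ^ 2)/2) * h
  unfold gd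
  linear_combination ((Real.sqrt (2 * Real.pi))⁻¹ * (Real.sqrt (2 * Real.pi))⁻¹) * he

def Gfun (c s v : ℝ) : ℝ :=
  v * (PhiBar (-(v * c)) * PhiBar (v * s)) + (1/c) * gd (v * c) * PhiBar (v * s)
    - (1/s) * gd (v * s) * PhiBar (-(v * c))
    - (1/(s * c)) * (Real.sqrt (2 * Real.pi))⁻¹ * PhiBar v

lemma hasDerivAt_G (c s : ℝ) (hc : 0 < c) (hs : 0 < s) (h1 : c ^ 2 + s ^ 2 = 1) (v : ℝ) :
    HasDerivAt (Gfun c s) (PhiBar (-(v * c)) * PhiBar (v * s)) v := by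
  have hA : HasDerivAt (fun v => PhiBar (-(v * c))) (c * gd (v * c)) v := by
    have h := (hasDerivAt_PhiBar (-(v * c))).comp v ((hasDerivAt_id v).mul_const c).neg
    convert h using 1
    · rfl
    · rfl
    · rfl
    rw [gd_even]; ring
  have hB : HasDerivAt (fun v => PhiBar (v * s)) (-(s * gd (v * s))) v := by
    have h := (hasDerivAt_PhiBar (v * s)).comp v ((hasDerivAt_id v).mul_const s)
    convert h using 1
    · rfl
    · rfl
    · rfl
    ring
  have ha : HasDerivAt (fun v => gd (v * c)) (-(v * c ^ 2 * gd (v * c))) v := by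
    have h := (hasDerivAt_gd (v * c)).comp v ((hasDerivAt_id v).mul_const c)
    convert h using 1
    · rfl
    · rfl
    · rfl
    ring
  have hb : HasDerivAt (fun v => gd (v * s)) (-(v * s ^ 2 * gd (v * s))) v := by
    have h := (hasDerivAt_gd (v * s)).comp v ((hasDerivAt_id v).mul_const s)
    convert h using 1
    · rfl
    · rfl
    · rfl
    ring
  have hP := hasDerivAt_PhiBar v
  have hT1 := (hasDerivAt_id v).mul (hA.mul hB)
  have hT2 := (ha.const_mul (1/c)).mul hB
  have hT3 := (hb.const_mul (1/s)).mul hA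
  have hT4 := hP.const_mul ((1/(s * c)) * (Real.sqrt (2 * Real.pi))⁻¹)
  have htot := ((hT1.add hT2).sub hT3).sub hT4
  have habmul := gd_mul c s v h1
  convert htot using 1
  · rfl
  · rfl
  · rfl
  simp only [id, Pi.mul_apply]
  have es : s ^ 2 * s⁻¹ = s := by field_simp [pow_two]
  have ec : c ^ 2 * c⁻¹ = c := by field_simp [pow_two]
  linear_combination (s/c + c/s) * habmul + ((Real.sqrt (2*Real.pi))⁻¹ * gd v / (s*c)) * h1
    + (-(PhiBar (-(v*c)) * v * gd (v*s)) - (Real.sqrt (2*Real.pi))⁻¹ * gd v * c⁻¹) * es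
    + (PhiBar (v*s) * v * gd (v*c) - (Real.sqrt (2*Real.pi))⁻¹ * gd v * s⁻¹) * ec

lemma G_tendsto_atTop (c s : ℝ) (hc : 0 < c) (hs : 0 < s) :
    Tendsto (Gfun c s) atTop (nhds 0) := by
  have hbc : Tendsto (fun v => gd (v * c)) atTop (nhds 0) :=
    gd_tendsto_atTop.comp (tendsto_id.atTop_mul_const hc)
  have hbs : Tendsto (fun v => gd (v * s)) atTop (nhds 0) :=
    gd_tendsto_atTop.comp (tendsto_id.atTop_mul_const hs)
  have h1 : Tendsto (fun v => v * (PhiBar (-(v * c)) * PhiBar (v * s))) atTop (nhds 0) := by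
    refine squeeze_zero_norm' ?_ (by simpa only [mul_zero] using hbs.const_mul (1/s))
    filter_upwards [eventually_gt_atTop 0] with v hv
    have hA := PhiBar_pos (-(v * c))
    have hA1 := PhiBar_le_one (-(v * c))
    have hB := PhiBar_pos (v * s)
    have key : (v * s) * PhiBar (v * s) ≤ gd (v * s) := mills _ (by positivity)
    rw [Real.norm_eq_abs, abs_of_nonneg (by positivity)]
    calc v * (PhiBar (-(v * c)) * PhiBar (v * s))
        ≤ v * (1 * PhiBar (v * s)) := by
          apply mul_le_mul_of_nonneg_left _ hv.le
          exact mul_le_mul_of_nonneg_right hA1 hB.le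
      _ = (1/s) * ((v * s) * PhiBar (v * s)) := by field_simp
      _ ≤ 1/s * gd (v * s) := by
          apply mul_le_mul_of_nonneg_left key (by positivity)
  have h2 : Tendsto (fun v => 1/c * gd (v * c) * PhiBar (v * s)) atTop (nhds 0) := by
    refine squeeze_zero_norm' ?_ (by simpa only [mul_zero] using hbc.const_mul (1/c))
    filter_upwards with v
    have := PhiBar_pos (v * s)
    have := PhiBar_le_one (v * s)
    have := gd_pos (v * c)
    rw [Real.norm_eq_abs, abs_of_nonneg (by positivity)]
    calc 1/c * gd (v * c) * PhiBar (v * s) ≤ 1/c * gd (v * c) * 1 := by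
          apply mul_le_mul_of_nonneg_left ‹PhiBar (v * s) ≤ 1› (by positivity)
      _ = 1/c * gd (v * c) := by ring
  have h3 : Tendsto (fun v => 1/s * gd (v * s) * PhiBar (-(v * c))) atTop (nhds 0) := by
    refine squeeze_zero_norm' ?_ (by simpa only [mul_zero] using hbs.const_mul (1/s))
    filter_upwards with v
    have := PhiBar_pos (-(v * c))
    have := PhiBar_le_one (-(v * c))
    have := gd_pos (v * s)
    rw [Real.norm_eq_abs, abs_of_nonneg (by positivity)]
    calc 1/s * gd (v * s) * PhiBar (-(v * c)) ≤ 1/s * gd (v * s) * 1 := by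
          apply mul_le_mul_of_nonneg_left ‹PhiBar (-(v * c)) ≤ 1› (by positivity)
      _ = 1/s * gd (v * s) := by ring
  have h4 : Tendsto (fun v => 1/(s * c) * (Real.sqrt (2 * Real.pi))⁻¹ * PhiBar v) atTop
      (nhds 0) := by
    have := PhiBar_tendsto_atTop.const_mul (1/(s * c) * (Real.sqrt (2 * Real.pi))⁻¹)
    simpa [mul_assoc] using this
  have := ((h1.add h2).sub h3).sub h4
  simp only [add_zero, sub_zero] at this
  exact this

lemma G_tendsto_atBot (c s : ℝ) (hc : 0 < c) (hs : 0 < s) :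
    Tendsto (Gfun c s) atBot
      (nhds (-(1/(s * c) * (Real.sqrt (2 * Real.pi))⁻¹))) := by
  have hbc : Tendsto (fun v => gd (v * c)) atBot (nhds 0) :=
    gd_tendsto_atBot.comp (tendsto_id.atBot_mul_const hc)
  have hbs : Tendsto (fun v => gd (v * s)) atBot (nhds 0) :=
    gd_tendsto_atBot.comp (tendsto_id.atBot_mul_const hs)
  have h1 : Tendsto (fun v => v * (PhiBar (-(v * c)) * PhiBar (v * s))) atBot (nhds 0) := by
    refine squeeze_zero_norm' ?_ (by simpa only [mul_zero] using hbc.const_mul (1/c))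
    filter_upwards [eventually_lt_atBot 0] with v hv
    have hA := PhiBar_pos (-(v * c))
    have hB := PhiBar_pos (v * s)
    have hB1 := PhiBar_le_one (v * s)
    have key : (-(v * c)) * PhiBar (-(v * c)) ≤ gd (-(v * c)) := by
      apply mills
      nlinarith
    rw [gd_even] at key
    rw [Real.norm_eq_abs, abs_of_nonpos (by nlinarith [mul_pos hA hB])]
    calc -(v * (PhiBar (-(v * c)) * PhiBar (v * s)))
        = (-v) * PhiBar (-(v * c)) * PhiBar (v * s) := by ring
      _ ≤ (-v) * PhiBar (-(v * c)) * 1 := by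
          apply mul_le_mul_of_nonneg_left hB1 (by nlinarith [hA.le])
      _ = (1/c) * ((-(v * c)) * PhiBar (-(v * c))) := by field_simp
      _ ≤ 1/c * gd (v * c) := by
          apply mul_le_mul_of_nonneg_left key (by positivity)
  have h2 : Tendsto (fun v => 1/c * gd (v * c) * PhiBar (v * s)) atBot (nhds 0) := by
    refine squeeze_zero_norm' ?_ (by simpa only [mul_zero] using hbc.const_mul (1/c))
    filter_upwards with v
    have := PhiBar_pos (v * s)
    have := PhiBar_le_one (v * s)
    have := gd_pos (v * c)
    rw [Real.norm_eq_abs, abs_of_nonneg (by positivity)]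
    calc 1/c * gd (v * c) * PhiBar (v * s) ≤ 1/c * gd (v * c) * 1 := by
          apply mul_le_mul_of_nonneg_left ‹PhiBar (v * s) ≤ 1› (by positivity)
      _ = 1/c * gd (v * c) := by ring
  have h3 : Tendsto (fun v => 1/s * gd (v * s) * PhiBar (-(v * c))) atBot (nhds 0) := by
    refine squeeze_zero_norm' ?_ (by simpa only [mul_zero] using hbs.const_mul (1/s))
    filter_upwards with v
    have := PhiBar_pos (-(v * c))
    have := PhiBar_le_one (-(v * c))
    have := gd_pos (v * s)
    rw [Real.norm_eq_abs, abs_of_nonneg (by positivity)]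
    calc 1/s * gd (v * s) * PhiBar (-(v * c)) ≤ 1/s * gd (v * s) * 1 := by
          apply mul_le_mul_of_nonneg_left ‹PhiBar (-(v * c)) ≤ 1› (by positivity)
      _ = 1/s * gd (v * s) := by ring
  have h4 : Tendsto (fun v => 1/(s * c) * (Real.sqrt (2 * Real.pi))⁻¹ * PhiBar v) atBot
      (nhds (1/(s * c) * (Real.sqrt (2 * Real.pi))⁻¹)) := by
    have := PhiBar_tendsto_atBot.const_mul (1/(s * c) * (Real.sqrt (2 * Real.pi))⁻¹)
    simpa [mul_assoc] using this
  have := ((h1.add h2).sub h3).sub h4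
  simp only [add_zero, zero_add, sub_zero, zero_sub] at this
  exact this.congr fun v => by simp [Gfun]


/-- the misclassification integral is positive and its
rescaled limit as σ → 0⁺ equals (tan(α/2)+cot(α/2))/(ℓ√(2π)). -/
theorem misclassification_rate_limit
    (ℓ α : ℝ) (hℓ : 0 < ℓ) (hα : α ∈ Set.Ioc (0 : ℝ) (Real.pi / 2)) :
    (∀ σ : ℝ, 0 < σ →
      0 < (1 / ℓ) * ∫ u in (-(ℓ / 2))..(ℓ / 2),
            PhiBar (-(u * Real.cos (α / 2)) / σ) * PhiBar ((u * Real.sin (α / 2)) / σ)) ∧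
    Tendsto
      (fun σ : ℝ =>
        σ⁻¹ * ((1 / ℓ) * ∫ u in (-(ℓ / 2))..(ℓ / 2),
          PhiBar (-(u * Real.cos (α / 2)) / σ) * PhiBar ((u * Real.sin (α / 2)) / σ)))
      (nhdsWithin 0 (Set.Ioi 0))
      (nhds ((1 / (ℓ * Real.sqrt (2 * Real.pi))) *
        (Real.tan (α / 2) + (Real.tan (α / 2))⁻¹))) := by
  obtain ⟨hα0, hα2⟩ := hα
  have hpi := Real.pi_pos
  set c := Real.cos (α / 2) with hc_def
  set s := Real.sin (α / 2) with hs_def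
  have hθ1 : 0 < α / 2 := by linarith
  have hθ2 : α / 2 < Real.pi / 2 := by linarith
  have hc : 0 < c := Real.cos_pos_of_mem_Ioo ⟨by linarith, hθ2⟩
  have hs : 0 < s := Real.sin_pos_of_pos_of_lt_pi hθ1 (by linarith)
  have hcs : c ^ 2 + s ^ 2 = 1 := by
    rw [hc_def, hs_def]; exact Real.cos_sq_add_sin_sq _
  have cont_f : Continuous fun v : ℝ => PhiBar (-(v * c)) * PhiBar (v * s) :=
    (PhiBar_continuous.comp (by continuity)).mul (PhiBar_continuous.comp (by continuity))
  constructor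
  · intro σ hσ
    apply mul_pos (by positivity : (0:ℝ) < 1 / ℓ)
    have cont : Continuous fun u : ℝ => PhiBar (-(u * c) / σ) * PhiBar ((u * s) / σ) :=
      (PhiBar_continuous.comp (by continuity)).mul (PhiBar_continuous.comp (by continuity))
    exact intervalIntegral.intervalIntegral_pos_of_pos (cont.intervalIntegrable _ _)
      (fun u => mul_pos (PhiBar_pos _) (PhiBar_pos _)) (by linarith)
  · have hFTC : ∀ a b : ℝ, (∫ v in a..b, PhiBar (-(v * c)) * PhiBar (v * s))
        = Gfun c s b - Gfun c s a := fun a b =>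
      intervalIntegral.integral_eq_sub_of_hasDerivAt
        (fun x _ => hasDerivAt_G c s hc hs hcs x) (cont_f.intervalIntegrable a b)
    have hbtop : Tendsto (fun σ : ℝ => ℓ / 2 / σ) (nhdsWithin 0 (Set.Ioi 0)) atTop := by
      have h := (tendsto_inv_nhdsGT_zero (𝕜 := ℝ)).const_mul_atTop (by positivity : 0 < ℓ / 2)
      exact h.congr fun σ => (div_eq_mul_inv _ _).symm
    have habot : Tendsto (fun σ : ℝ => -(ℓ / 2) / σ) (nhdsWithin 0 (Set.Ioi 0)) atBot := by
      have h := tendsto_neg_atTop_atBot.comp hbtop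
      exact h.congr fun σ => by simp [Function.comp, neg_div]
    have hGtop := (G_tendsto_atTop c s hc hs).comp hbtop
    have hGbot := (G_tendsto_atBot c s hc hs).comp habot
    have hten := ((hGtop.sub hGbot).const_mul (1 / ℓ))
    have hval : (1 / ℓ) * ((0 : ℝ) - (-(1 / (s * c) * (Real.sqrt (2 * Real.pi))⁻¹)))
        = (1 / (ℓ * Real.sqrt (2 * Real.pi))) * (Real.tan (α / 2) + (Real.tan (α / 2))⁻¹) := by
      rw [Real.tan_eq_sin_div_cos, ← hs_def, ← hc_def]
      have h2p := sqrt_two_pi_pos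
      field_simp
      linear_combination (-1 : ℝ) * hcs
    rw [← hval]
    apply Tendsto.congr' _ hten
    filter_upwards [self_mem_nhdsWithin] with σ (hσ : σ ∈ Set.Ioi 0)
    have hσ0 : (0:ℝ) < σ := hσ
    have harg : (∫ u in (-(ℓ / 2))..(ℓ / 2), PhiBar (-(u * c) / σ) * PhiBar ((u * s) / σ))
        = ∫ u in (-(ℓ / 2))..(ℓ / 2), (fun v => PhiBar (-(v * c)) * PhiBar (v * s)) (u / σ) := by
      apply intervalIntegral.integral_congr
      intro u _
      simp only
      rw [show -(u * c) / σ = -(u / σ * c) by ring, show (u * s) / σ = u / σ * s by ring]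
    have hcomp := intervalIntegral.integral_comp_div
      (f := fun v => PhiBar (-(v * c)) * PhiBar (v * s))
      (a := -(ℓ / 2)) (b := ℓ / 2) hσ0.ne'
    rw [harg, hcomp, smul_eq_mul, hFTC]
    simp only [Function.comp]
    field_simp
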